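/- arXiv:2506.01310 — 2 statements merged into one kernel-verified Lean document; each statement's English description precedes it below -/
import Mathlib

section
/- In the weighted projective space P(1,2,3,5) with coordinates x,y,z,t, the curve defined by x = 0 on the surface S_10 given by x·f_9(x,y,z,t) + y^5 + y^2z^2 + yzt + t^2 = 0, i.e. the curve {y^5 + y^2z^2 + yzt + t^2 = 0} in P(2,3,5), is irreducible. -/
set_option maxHeartbeats 1000000

open MvPolynomial

theorem stmt_7 (K : Type*) [Field K] [IsAlgClosed K] [CharZero K] :
    Irreducible ((X 0) ^ 5 + (X 0) ^ 2 * (X 1) ^ 2 + (X 0) * (X 1) * (X 2) + (X 2) ^ 2 :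
      MvPolynomial (Fin 3) K) := by
  classical
  set P : MvPolynomial (Fin 3) K :=
    (X 0) ^ 5 + (X 0) ^ 2 * (X 1) ^ 2 + (X 0) * (X 1) * (X 2) + (X 2) ^ 2 with hP
  -- transport along rename(swap 0 2) then finSuccEquiv
  let e : MvPolynomial (Fin 3) K ≃+* Polynomial (MvPolynomial (Fin 2) K) :=
    ((renameEquiv K (Equiv.swap (0 : Fin 3) 2)).trans (finSuccEquiv K 2)).toRingEquiv
  rw [← MulEquiv.irreducible_iff (M := MvPolynomial (Fin 3) K) (N := Polynomial (MvPolynomial (Fin 2) K)) (e : MvPolynomial (Fin 3) K ≃* _)]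
  have h1 : (1 : Fin 3) = Fin.succ (0 : Fin 2) := rfl
  have h2 : (2 : Fin 3) = Fin.succ (1 : Fin 2) := rfl
  have heP : (e : MvPolynomial (Fin 3) K ≃* _) P =
      Polynomial.X ^ 2 + Polynomial.C ((X 1 : MvPolynomial (Fin 2) K) * X 0) * Polynomial.X
        + Polynomial.C ((X 1 : MvPolynomial (Fin 2) K) ^ 5 + (X 1) ^ 2 * (X 0) ^ 2) := by
    show ((renameEquiv K (Equiv.swap (0 : Fin 3) 2)).trans (finSuccEquiv K 2)) P = _
    simp only [hP, AlgEquiv.trans_apply, map_add, map_mul, map_pow, renameEquiv_apply, rename_X]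
    rw [Equiv.swap_apply_left, Equiv.swap_apply_right,
      Equiv.swap_apply_of_ne_of_ne (by decide) (by decide), h1, h2,
      finSuccEquiv_X_zero, finSuccEquiv_X_succ, finSuccEquiv_X_succ]
    ring
  rw [heP]
  set R := MvPolynomial (Fin 2) K
  set a' : R := (X 1) * X 0 with ha'
  set b' : R := (X 1) ^ 5 + (X 1) ^ 2 * (X 0) ^ 2 with hb'
  set p : Polynomial R := Polynomial.X ^ 2 + Polynomial.C a' * Polynomial.X + Polynomial.C b'
    with hpdef
  have hmonic : p.Monic := by
    rw [hpdef]; monicity!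
  have hdeg : p.natDegree = 2 := by
    rw [hpdef]; compute_degree!
  by_contra hirr
  obtain ⟨c₁, c₂, hmul, hadd⟩ := (hmonic.not_irreducible_iff_exists_add_mul_eq_coeff hdeg).mp hirr
  have hc0 : p.coeff 0 = b' := by simp [hpdef]
  have hc1 : p.coeff 1 = a' := by simp [hpdef]
  rw [hc0] at hmul
  rw [hc1] at hadd
  -- discriminant equation
  rw [hb'] at hmul
  rw [ha'] at hadd
  have hs : (c₁ - c₂) ^ 2 = -(4 * (X 1 : R) ^ 5 + 3 * (X 1) ^ 2 * (X 0) ^ 2) := by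
    linear_combination -(c₁ + c₂ + (X 1 : R) * X 0) * hadd + 4 * hmul
  -- move to Polynomial (MvPolynomial (Fin 1) K)
  set S := MvPolynomial (Fin 1) K
  set φ : R →+* Polynomial S := (finSuccEquiv K 1 : R ≃+* Polynomial S).toRingHom with hφ
  set w : S := X 0 with hw
  have hφ0 : φ (X 0) = Polynomial.X := finSuccEquiv_X_zero
  have hφ1 : φ (X 1) = Polynomial.C w := by
    have : (1 : Fin 2) = Fin.succ (0 : Fin 1) := rfl
    rw [hφ, this]; exact finSuccEquiv_X_succ
  set T : Polynomial S := φ (c₁ - c₂) with hT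
  have hTeq : T ^ 2 = -(Polynomial.C (4 * w ^ 5) + Polynomial.C (3 * w ^ 2) * Polynomial.X ^ 2) := by
    have h := congrArg φ hs
    simp only [map_pow, map_neg, map_add, map_mul, map_ofNat, hφ0, hφ1] at h
    rw [hT, h]
    simp only [map_mul, map_pow, map_ofNat, Polynomial.C_pow]
    try ring
  have hwne : w ≠ 0 := MvPolynomial.X_ne_zero 0
  have h3 : (3 : S) * w ^ 2 ≠ 0 := by
    have : (3 : S) ≠ 0 := by norm_num
    exact mul_ne_zero this (pow_ne_zero _ hwne)
  have hqdeg : (-(Polynomial.C (4 * w ^ 5) + Polynomial.C (3 * w ^ 2) * Polynomial.X ^ 2)).natDegree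
      = 2 := by
    rw [Polynomial.natDegree_neg]
    compute_degree!
  have hTdeg : T.natDegree = 1 := by
    have := congrArg Polynomial.natDegree hTeq
    rw [Polynomial.natDegree_pow, hqdeg] at this
    omega
  set α : S := T.coeff 1 with hα
  set β : S := T.coeff 0 with hβ
  have hTX : T = Polynomial.C α * Polynomial.X + Polynomial.C β :=
    Polynomial.eq_X_add_C_of_natDegree_le_one (by omega)
  have hsq : (Polynomial.C α * Polynomial.X + Polynomial.C β) ^ 2
      = Polynomial.C (α ^ 2) * Polynomial.X ^ 2 + Polynomial.C (2 * (α * β)) * Polynomial.X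
        + Polynomial.C (β ^ 2) := by
    simp only [map_mul, map_pow, map_ofNat]
    ring
  rw [hTX, hsq] at hTeq
  have e2 := congrArg (fun q => Polynomial.coeff q 2) hTeq
  have e1 := congrArg (fun q => Polynomial.coeff q 1) hTeq
  have e0 := congrArg (fun q => Polynomial.coeff q 0) hTeq
  simp only [Polynomial.coeff_neg, Polynomial.coeff_add, Polynomial.coeff_C_mul,
    Polynomial.coeff_X_pow, Polynomial.coeff_X, Polynomial.coeff_C] at e2 e1 e0
  norm_num at e2 e1 e0
  have hαne : α ≠ 0 := by
    intro h
    rw [h] at e2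
    exact h3 (by linear_combination e2)
  have hβ0 : β = 0 := e1.resolve_left hαne
  rw [hβ0] at e0
  have : (4 : S) * w ^ 5 ≠ 0 := mul_ne_zero (by norm_num) (pow_ne_zero _ hwne)
  exact this (by linear_combination e0)
end

section
/- The polynomial y^5 + y·z·t + z^3, quasi-homogeneous of degree 15 in variables y,z,t of weights 3,5,7, is irreducible over an algebraically closed field of characteristic zero. -/
/-!
Viewed as a polynomial in `t` over `K[y, z]`, the polynomial is linear: `(y z) t + (y⁵ + z³)`.
A primitive linear polynomial over a domain is irreducible, and `y z` and `y⁵ + z³` have no common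
prime factor, since `y ∣ y⁵ + z³` would force `y ∣ z`, and symmetrically.
-/

open MvPolynomial

theorem Prime.isRelPrime_mul_add_pow {R : Type*} [CommRing R] [IsDomain R]
    [DecompositionMonoid R] {p q : R} (hp : Prime p) (hq : Prime q) (hpq : ¬p ∣ q)
    (hqp : ¬q ∣ p) {m n : ℕ} (hm : m ≠ 0) (hn : n ≠ 0) :
    IsRelPrime (p * q) (p ^ m + q ^ n) := by
  refine IsRelPrime.mul_left (hp.irreducible.isRelPrime_iff_not_dvd.2 fun h ↦ hpq ?_)
    (hq.irreducible.isRelPrime_iff_not_dvd.2 fun h ↦ hqp ?_)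
  · exact hp.dvd_of_dvd_pow ((dvd_add_right (dvd_pow_self p hm)).mp h)
  · exact hq.dvd_of_dvd_pow ((dvd_add_left (dvd_pow_self q hn)).mp h)

namespace MvPolynomial

theorem finSuccEquiv_rename_succ {R : Type*} [CommSemiring R] {n : ℕ}
    (p : MvPolynomial (Fin n) R) : finSuccEquiv R n (rename Fin.succ p) = Polynomial.C p := by
  induction p using MvPolynomial.induction_on with
  | C r => simp [algebraMap_eq, finSuccEquiv_apply]
  | add p q hp hq => simp [hp, hq]
  | mul_X p i hp => simp [hp, finSuccEquiv_X_succ]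

theorem irreducible_rename_succ_mul_X_zero_add {R : Type*} [CommRing R] [IsDomain R] {n : ℕ}
    {a b : MvPolynomial (Fin n) R} (ha : a ≠ 0) (hab : IsRelPrime a b) :
    Irreducible (rename Fin.succ a * X 0 + rename Fin.succ b) := by
  rw [← MulEquiv.irreducible_iff (finSuccEquiv R n)]
  simpa [finSuccEquiv_rename_succ, finSuccEquiv_X_zero] using
    Polynomial.irreducible_C_mul_X_add_C ha hab

end MvPolynomial

theorem stmt_8_general (K : Type*) [Field K] :
    Irreducible ((X 0) ^ 5 + (X 0) * (X 1) * (X 2) + (X 1) ^ 3 :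
      MvPolynomial (Fin 3) K) := by
  have hrel : IsRelPrime (X 0 * X 1 : MvPolynomial (Fin 2) K) (X 0 ^ 5 + X 1 ^ 3) :=
    Prime.isRelPrime_mul_add_pow X_prime X_prime (by simp) (by simp) (by norm_num) (by norm_num)
  have hirr := irreducible_rename_succ_mul_X_zero_add
    (mul_ne_zero (X_ne_zero 0) (X_ne_zero 1)) hrel
  -- rotating the variables moves `t` to the front, where `finSuccEquiv` splits it off
  rw [← MulEquiv.irreducible_iff (renameEquiv K (finRotate 3))]
  convert hirr using 1
  simp only [renameEquiv_apply, map_add, map_pow, map_mul, rename_X, finRotate_apply,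
    Fin.isValue, zero_add, Fin.reduceAdd, Nat.reduceAdd, Fin.succ_zero_eq_one, Fin.succ_one_eq_two]
  ring

theorem stmt_8 (K : Type*) [Field K] [IsAlgClosed K] [CharZero K] :
    Irreducible ((X 0) ^ 5 + (X 0) * (X 1) * (X 2) + (X 1) ^ 3 :
      MvPolynomial (Fin 3) K) :=
  stmt_8_general K
end
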